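/- Let Π = Π(ρ, F) and Π' = Π(ρ', F') be two transition matrices of the network formation game on the same set of networks S = (E → Bool), built from possibly different meeting functions ρ, ρ' and acceptance functions F, F'. If τ and σ are natural numbers with τ ≤ card E and σ ≤ card E, and the set of pairs (g, w) for which (Π^τ) g w > 0 equals the set of pairs (g, w) for which (Π'^σ) g w > 0, then τ = σ. (Thus the number of rounds τ₀ is identified from the support of the τ₀-step transition matrix whenever τ₀ ≤ card E.) -/

import Mathlib

open Matrix Finset Filter

/-- Flip the link `e` in network `g`. -/
def flipL {E : Type*} [DecidableEq E] (e : E) (g : E → Bool) : E → Bool :=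
  Function.update g e (!(g e))

/-- The one-step transition matrix of the network formation game. -/
noncomputable def netPi {E : Type*} [DecidableEq E] [Fintype E]
    (ρ : E → (E → Bool) → ℝ) (F : (E → Bool) → E → ℝ) :
    Matrix (E → Bool) (E → Bool) ℝ :=
  Matrix.of fun g w =>
    if g = w then ∑ e, ρ e g * (1 - F g e)
    else ∑ e, if w = flipL e g then ρ e g * F g e else 0

/-- A meeting function: strictly positive selection probabilities summing to one. -/
def IsMeeting {E : Type*} [Fintype E] (ρ : E → (E → Bool) → ℝ) : Prop :=
  (∀ e g, 0 < ρ e g) ∧ ∀ g, ∑ e, ρ e g = 1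

/-- An acceptance function: probabilities strictly between 0 and 1, complementary under flips. -/
def IsAcceptance {E : Type*} [DecidableEq E] (F : (E → Bool) → E → ℝ) : Prop :=
  (∀ g e, 0 < F g e ∧ F g e < 1) ∧ ∀ g e, F g e + F (flipL e g) e = 1

section aux
variable {E : Type*} [DecidableEq E] [Fintype E]

lemma flipL_apply_self (e : E) (g : E → Bool) : flipL e g e = !(g e) :=
  Function.update_self _ _ _

lemma flipL_apply_ne (e : E) (g : E → Bool) {i : E} (h : i ≠ e) : flipL e g i = g i :=
  Function.update_of_ne h _ _

lemma flipL_ne (e : E) (g : E → Bool) : flipL e g ≠ g := by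
  intro h
  have := congrFun h e
  rw [flipL_apply_self] at this
  cases hh : g e <;> simp [hh] at this

lemma hammingDist_flipL (e : E) (g : E → Bool) : hammingDist g (flipL e g) = 1 := by
  have h : ({i | g i ≠ flipL e g i} : Finset E) = {e} := by
    ext i
    rcases eq_or_ne i e with rfl | h
    · simp only [Finset.mem_filter, Finset.mem_univ, true_and, Finset.mem_singleton,
        flipL_apply_self]
      cases g i <;> simp
    · simp [flipL_apply_ne _ _ h, h]
  simp [hammingDist, h]

lemma hammingDist_le_one_iff {g w : E → Bool} :
    hammingDist g w ≤ 1 ↔ w = g ∨ ∃ e, w = flipL e g := by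
  constructor
  · intro h
    interval_cases hd : hammingDist g w
    · left; exact (hammingDist_eq_zero.mp hd).symm
    · right
      rw [hammingDist, Finset.card_eq_one] at hd
      obtain ⟨e, he⟩ := hd
      refine ⟨e, funext fun i => ?_⟩
      rcases eq_or_ne i e with rfl | h
      · have hi : g i ≠ w i := by
          have : i ∈ ({j | g j ≠ w j} : Finset E) := by rw [he]; simp
          simpa using this
        rw [flipL_apply_self]
        cases hg : g i <;> cases hw : w i <;> simp_all
      · have hi : ¬ g i ≠ w i := by
          have : i ∉ ({j | g j ≠ w j} : Finset E) := by rw [he]; simpa using h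
          simpa using this
        rw [flipL_apply_ne _ _ h]
        exact (not_not.mp hi).symm
  · rintro (rfl | ⟨e, rfl⟩)
    · simp
    · exact le_of_eq (hammingDist_flipL e g)

variable {ρ : E → (E → Bool) → ℝ} {F : (E → Bool) → E → ℝ}

lemma netPi_apply_flip (e : E) (g : E → Bool) :
    netPi ρ F g (flipL e g) = ρ e g * F g e := by
  have hne : g ≠ flipL e g := (flipL_ne e g).symm
  have key : ∀ e', (flipL e g = flipL e' g) ↔ e' = e := by
    intro e'
    constructor
    · intro h
      by_contra hne'
      have := congrFun h e'
      rw [flipL_apply_self, flipL_apply_ne _ _ hne'] at this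
      cases hg : g e' <;> simp [hg] at this
    · rintro rfl; rfl
  simp only [netPi, Matrix.of_apply, if_neg hne]
  rw [Finset.sum_congr rfl (fun e' _ => by rw [if_congr (key e') rfl rfl])]
  simp

lemma netPi_eq_zero {g w : E → Bool} (h1 : g ≠ w) (h2 : ∀ e, w ≠ flipL e g) :
    netPi ρ F g w = 0 := by
  simp [netPi, h1, h2]

lemma netPi_nonneg (hρ : IsMeeting ρ) (hF : IsAcceptance F) (g w : E → Bool) :
    0 ≤ netPi ρ F g w := by
  unfold netPi
  simp only [Matrix.of_apply]
  split
  · exact Finset.sum_nonneg fun e _ => mul_nonneg (hρ.1 e g).le (by linarith [(hF.1 g e).2])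
  · refine Finset.sum_nonneg fun e _ => ?_
    split
    · exact mul_nonneg (hρ.1 e g).le (hF.1 g e).1.le
    · exact le_refl 0

lemma netPi_diag_pos [Nonempty E] (hρ : IsMeeting ρ) (hF : IsAcceptance F) (g : E → Bool) :
    0 < netPi ρ F g g := by
  simp only [netPi, Matrix.of_apply, if_pos rfl]
  exact Finset.sum_pos
    (fun e _ => mul_pos (hρ.1 e g) (by linarith [(hF.1 g e).2])) Finset.univ_nonempty

lemma netPi_pos_iff [Nonempty E] (hρ : IsMeeting ρ) (hF : IsAcceptance F) (g w : E → Bool) :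
    0 < netPi ρ F g w ↔ hammingDist g w ≤ 1 := by
  rw [hammingDist_le_one_iff]
  constructor
  · intro h
    by_contra hc
    push_neg at hc
    rw [netPi_eq_zero (fun he => hc.1 he.symm) hc.2] at h
    exact lt_irrefl 0 h
  · rintro (rfl | ⟨e, rfl⟩)
    · exact netPi_diag_pos hρ hF _
    · rw [netPi_apply_flip]
      exact mul_pos (hρ.1 e g) (hF.1 g e).1

lemma netPi_pow_nonneg (hρ : IsMeeting ρ) (hF : IsAcceptance F) (τ : ℕ) (g w : E → Bool) :
    0 ≤ (netPi ρ F ^ τ) g w := by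
  induction τ generalizing g w with
  | zero => rw [pow_zero, Matrix.one_apply]; split <;> norm_num
  | succ n ih =>
      rw [pow_succ', Matrix.mul_apply]
      exact Finset.sum_nonneg fun u _ => mul_nonneg (netPi_nonneg hρ hF g u) (ih u w)

lemma netPi_pow_pos_iff [Nonempty E] (hρ : IsMeeting ρ) (hF : IsAcceptance F) (τ : ℕ)
    (g w : E → Bool) : 0 < (netPi ρ F ^ τ) g w ↔ hammingDist g w ≤ τ := by
  induction τ generalizing g w with
  | zero =>
      rw [pow_zero, Matrix.one_apply, Nat.le_zero, hammingDist_eq_zero]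
      split <;> simp_all
  | succ n ih =>
      rw [pow_succ', Matrix.mul_apply]
      constructor
      · intro h
        obtain ⟨u, -, hu⟩ := Finset.exists_lt_of_sum_lt (by simpa using h : ∑ u : E → Bool, (0:ℝ) < _)
        have h1 : 0 < netPi ρ F g u := by
          rcases (netPi_nonneg hρ hF g u).lt_or_eq with h' | h'
          · exact h'
          · rw [← h', zero_mul] at hu; exact absurd hu (lt_irrefl 0)
        have h2 : 0 < (netPi ρ F ^ n) u w := by
          rcases (netPi_pow_nonneg hρ hF n u w).lt_or_eq with h' | h'
          · exact h'
          · rw [← h', mul_zero] at hu; exact absurd hu (lt_irrefl 0)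
        calc hammingDist g w ≤ hammingDist g u + hammingDist u w := hammingDist_triangle g u w
          _ ≤ 1 + n := add_le_add ((netPi_pos_iff hρ hF g u).mp h1) ((ih u w).mp h2)
          _ = n + 1 := by omega
      · intro h
        rcases Nat.lt_or_ge (hammingDist g w) (n + 1) with h' | h'
        · -- use u = g
          refine Finset.sum_pos' (fun u _ => mul_nonneg (netPi_nonneg hρ hF g u)
            (netPi_pow_nonneg hρ hF n u w)) ⟨g, Finset.mem_univ g, ?_⟩
          exact mul_pos (netPi_diag_pos hρ hF g) ((ih g w).mpr (Nat.lt_succ_iff.mp h'))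
        · -- distance exactly n+1 : flip one differing coordinate
          have hd : hammingDist g w = n + 1 := le_antisymm h h'
          have hpos : 0 < hammingDist g w := by omega
          have : ({i | g i ≠ w i} : Finset E).Nonempty := by
            rw [← Finset.card_pos]; exact hpos
          obtain ⟨e, he⟩ := this
          have heg : g e ≠ w e := by simpa using he
          have hset : ({i | flipL e g i ≠ w i} : Finset E) = ({i | g i ≠ w i} : Finset E) \ {e} := by
            ext i
            rcases eq_or_ne i e with rfl | h''
            · simp only [Finset.mem_filter, Finset.mem_univ, true_and, Finset.mem_sdiff,
                Finset.mem_singleton, flipL_apply_self]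
              cases hg : g i <;> cases hw : w i <;> simp_all
            · simp [flipL_apply_ne _ _ h'', h'']
          have hdist : hammingDist (flipL e g) w = n := by
            have : hammingDist (flipL e g) w = hammingDist g w - 1 := by
              rw [hammingDist, hset, Finset.card_sdiff_of_subset (by simpa using he)]
              simp [hammingDist]
            omega
          refine Finset.sum_pos' (fun u _ => mul_nonneg (netPi_nonneg hρ hF g u)
            (netPi_pow_nonneg hρ hF n u w)) ⟨flipL e g, Finset.mem_univ _, ?_⟩
          refine mul_pos ?_ ((ih _ w).mpr hdist.le)
          rw [netPi_apply_flip]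
          exact mul_pos (hρ.1 e g) (hF.1 g e).1

lemma exists_hammingDist_eq (n : ℕ) (hn : n ≤ Fintype.card E) :
    ∃ g w : E → Bool, hammingDist g w = n := by
  obtain ⟨s, -, hs⟩ := Finset.exists_subset_card_eq (s := (Finset.univ : Finset E)) (n := n) (by simpa using hn)
  refine ⟨fun _ => false, fun i => decide (i ∈ s), ?_⟩
  rw [← hs, hammingDist]
  congr 1
  ext i
  simp

end aux

/-- The number of rounds is identified from the support of the multi-step transition
matrix: if `τ, σ ≤ card E` and `Π^τ` and `Π'^σ` have the same support, then `τ = σ`. -/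
theorem rounds_identified_from_support {E : Type*} [DecidableEq E] [Fintype E] [Nonempty E]
    (ρ ρ' : E → (E → Bool) → ℝ) (F F' : (E → Bool) → E → ℝ)
    (hρ : IsMeeting ρ) (hF : IsAcceptance F) (hρ' : IsMeeting ρ') (hF' : IsAcceptance F')
    (τ σ : ℕ) (hτ : τ ≤ Fintype.card E) (hσ : σ ≤ Fintype.card E)
    (hsupp : ∀ g w : E → Bool, 0 < (netPi ρ F ^ τ) g w ↔ 0 < (netPi ρ' F' ^ σ) g w) :
    τ = σ := by
  have key : ∀ g w : E → Bool, hammingDist g w ≤ τ ↔ hammingDist g w ≤ σ := by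
    intro g w
    rw [← netPi_pow_pos_iff hρ hF τ g w, ← netPi_pow_pos_iff hρ' hF' σ g w]
    exact hsupp g w
  obtain ⟨g, w, hgw⟩ := exists_hammingDist_eq τ hτ
  obtain ⟨g', w', hgw'⟩ := exists_hammingDist_eq σ hσ
  have h1 : τ ≤ σ := hgw ▸ (key g w).mp hgw.le
  have h2 : σ ≤ τ := hgw' ▸ (key g' w').mpr hgw'.le
  omega
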